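/- arXiv:1704.05214 — 3 statements merged into one kernel-verified Lean document; each statement's English description precedes it below -/
import Mathlib

section
/- Any finite subgroup G of the group of germs of holomorphic diffeomorphisms of (ℂ,0) is conjugate (by an element of the same group) to a subgroup of the linear group {z ↦ az : a ∈ ℂ*}; moreover such G is cyclic. -/
open Filter Topology

/-! The germ `h = ∑_{f ∈ G} f'(0)⁻¹ • f` has `h'(0) = |G| ≠ 0`, and since right composition with
`f ∈ G` permutes `G`, it satisfies `h ∘ f = f'(0) • h`: `h` linearizes `G`. As `h` is locally
injective, a germ of `G` is determined by its multiplier `f'(0)`. The multipliers form a finite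
subgroup of `ℂˣ`, which is cyclic, so `G` consists of the iterates of a germ whose multiplier
generates it. -/

section Cancellation

variable {𝕜 : Type*} [NontriviallyNormedField 𝕜] [CompleteSpace 𝕜] {f : 𝕜 → 𝕜} {f' a : 𝕜}

theorem HasStrictDerivAt.eventuallyEq_of_comp_left (hf : HasStrictDerivAt f f' a) (hf' : f' ≠ 0)
    {α : Type*} {l : Filter α} {u v : α → 𝕜} (hu : Tendsto u l (𝓝 a)) (hv : Tendsto v l (𝓝 a))
    (h : f ∘ u =ᶠ[l] f ∘ v) : u =ᶠ[l] v := by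
  have hinv := hf.eventually_left_inverse hf'
  filter_upwards [h, hu.eventually hinv, hv.eventually hinv] with z hz hzu hzv
  rw [← hzu, ← hzv]
  exact congrArg _ hz

theorem HasStrictDerivAt.eventuallyEq_of_comp_right (hf : HasStrictDerivAt f f' a) (hf' : f' ≠ 0)
    {β : Type*} {u v : 𝕜 → β} (h : u ∘ f =ᶠ[𝓝 a] v ∘ f) : u =ᶠ[𝓝 (f a)] v := by
  rwa [← hf.map_nhds_eq hf', EventuallyEq, eventually_map]

end Cancellation

theorem pow_succ_mem_of_mul_mem {M : Type*} [Monoid M] {s : Set M}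
    (hmul : ∀ a ∈ s, ∀ b ∈ s, a * b ∈ s) {x : M} (hx : x ∈ s) : ∀ n : ℕ, x ^ (n + 1) ∈ s
  | 0 => by rwa [zero_add, pow_one]
  | n + 1 => by rw [pow_succ]; exact hmul _ (pow_succ_mem_of_mul_mem hmul hx n) _ hx

theorem Set.Finite.isOfFinOrder_of_mul_mem {M : Type*} [LeftCancelMonoid M] {s : Set M}
    (hs : s.Finite) (hmul : ∀ a ∈ s, ∀ b ∈ s, a * b ∈ s) {x : M} (hx : x ∈ s) :
    IsOfFinOrder x := by
  refine finite_powers.1 ((hs.insert 1).subset ?_)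
  rintro _ ⟨_ | n, rfl⟩
  · simp
  · exact Set.mem_insert_of_mem _ (pow_succ_mem_of_mul_mem hmul hx n)

theorem Set.Finite.inv_mem_of_mul_mem {G : Type*} [Group G] {s : Set G} (hs : s.Finite)
    (hmul : ∀ a ∈ s, ∀ b ∈ s, a * b ∈ s) {x : G} (hx : x ∈ s) : x⁻¹ ∈ s := by
  obtain ⟨n, hn, hxn⟩ := isOfFinOrder_iff_pow_eq_one.1 (hs.isOfFinOrder_of_mul_mem hmul hx)
  have hinv : x⁻¹ = x ^ ((2 * n - 2) + 1) := by
    refine inv_eq_of_mul_eq_one_right ?_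
    rw [← pow_succ', show 2 * n - 2 + 1 + 1 = n * 2 by omega, pow_mul, hxn, one_pow]
  exact hinv ▸ pow_succ_mem_of_mul_mem hmul hx _

/-- `s` is a finite subgroup of `Kˣ`, hence cyclic. -/
theorem Set.Finite.exists_pow_succ_eq_of_mul_mem {K : Type*} [Field K] {s : Set K}
    (hs : s.Finite) (hne : s.Nonempty) (h0 : 0 ∉ s) (hmul : ∀ a ∈ s, ∀ b ∈ s, a * b ∈ s) :
    ∃ a ∈ s, ∀ b ∈ s, ∃ n : ℕ, b = a ^ (n + 1) := by
  set t : Set Kˣ := Units.val ⁻¹' s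
  have ht : t.Finite := hs.preimage Units.val_injective.injOn
  have htmul : ∀ a ∈ t, ∀ b ∈ t, a * b ∈ t := fun a ha b hb => by
    simpa [t] using hmul _ ha _ hb
  have hunit : ∀ b (hb : b ∈ s), Units.mk0 b (ne_of_mem_of_not_mem hb h0) ∈ t := fun _ hb => hb
  obtain ⟨x, hx⟩ := hne
  let H : Subgroup Kˣ :=
    { carrier := t
      mul_mem' := fun ha hb => htmul _ ha _ hb
      one_mem' := by
        simpa using htmul _ (hunit x hx) _ (ht.inv_mem_of_mul_mem htmul (hunit x hx))
      inv_mem' := ht.inv_mem_of_mul_mem htmul }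
  have : Finite H := Set.Finite.to_subtype (s := (H : Set Kˣ)) ht
  obtain ⟨g, hg⟩ := IsCyclic.exists_monoid_generator (α := H)
  refine ⟨((g : Kˣ) : K), g.2, fun b hb => ?_⟩
  obtain ⟨k, hk⟩ := hg ⟨_, hunit b hb⟩
  have hgk : g ^ (k + orderOf g) = ⟨_, hunit b hb⟩ := by
    rw [pow_add, pow_orderOf_eq_one, mul_one]; exact hk
  refine ⟨k + orderOf g - 1, ?_⟩
  rw [Nat.sub_add_cancel (Nat.le_add_left_of_le (orderOf_pos g))]
  simpa using congrArg (fun y : H => ((y : Kˣ) : K)) hgk.symm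

section Germs

variable {𝕜 : Type*} [NontriviallyNormedField 𝕜]

/-- Functions standing for the pairwise distinct germs of a finite subgroup of `Diff(𝕜, 0)`;
composition is only asked to hold near `0`. -/
structure IsGermGroup (G : Finset (𝕜 → 𝕜)) : Prop where
  analyticAt : ∀ f ∈ G, AnalyticAt 𝕜 f 0
  map_zero : ∀ f ∈ G, f 0 = 0
  deriv_ne_zero : ∀ f ∈ G, deriv f 0 ≠ 0
  exists_eventuallyEq_comp : ∀ f ∈ G, ∀ g ∈ G, ∃ h ∈ G, h =ᶠ[𝓝 0] f ∘ g
  eq_of_eventuallyEq : ∀ f ∈ G, ∀ g ∈ G, f =ᶠ[𝓝 0] g → f = g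

noncomputable def linearizer (G : Finset (𝕜 → 𝕜)) (z : 𝕜) : 𝕜 :=
  ∑ f ∈ G, (deriv f 0)⁻¹ * f z

namespace IsGermGroup

variable {G : Finset (𝕜 → 𝕜)} {e f g : 𝕜 → 𝕜}

theorem tendsto (hG : IsGermGroup G) (hf : f ∈ G) : Tendsto f (𝓝 0) (𝓝 0) := by
  simpa [hG.map_zero f hf] using (hG.analyticAt f hf).continuousAt.tendsto

theorem deriv_eq_mul (hG : IsGermGroup G) (hf : f ∈ G) (hg : g ∈ G)
    (he : e =ᶠ[𝓝 0] f ∘ g) : deriv e 0 = deriv f 0 * deriv g 0 := by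
  have hfg : DifferentiableAt 𝕜 f (g 0) := by
    rw [hG.map_zero g hg]; exact (hG.analyticAt f hf).differentiableAt
  rw [he.deriv_eq, deriv_comp 0 hfg (hG.analyticAt g hg).differentiableAt, hG.map_zero g hg]

theorem mul_mem_image_deriv (hG : IsGermGroup G) :
    ∀ a ∈ (deriv · 0) '' (G : Set (𝕜 → 𝕜)), ∀ b ∈ (deriv · 0) '' (G : Set (𝕜 → 𝕜)),
      a * b ∈ (deriv · 0) '' (G : Set (𝕜 → 𝕜)) := by
  rintro _ ⟨f, hf, rfl⟩ _ ⟨g, hg, rfl⟩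
  obtain ⟨e, he, hefg⟩ := hG.exists_eventuallyEq_comp f hf g hg
  exact ⟨e, he, hG.deriv_eq_mul hf hg hefg⟩

theorem exists_eventuallyEq_iterate (hG : IsGermGroup G) (hg : g ∈ G) (n : ℕ) :
    ∃ e ∈ G, e =ᶠ[𝓝 0] g^[n + 1] ∧ deriv e 0 = deriv g 0 ^ (n + 1) := by
  induction n with
  | zero => exact ⟨g, hg, by simp, by simp⟩
  | succ n ih =>
    obtain ⟨e, he, heg, hde⟩ := ih
    obtain ⟨e', he', he'eg⟩ := hG.exists_eventuallyEq_comp e he g hg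
    refine ⟨e', he', he'eg.trans ?_, by rw [hG.deriv_eq_mul he hg he'eg, hde, ← pow_succ]⟩
    rw [Function.iterate_succ]
    exact heg.comp_tendsto (hG.tendsto hg)

theorem analyticAt_linearizer (hG : IsGermGroup G) : AnalyticAt 𝕜 (linearizer G) 0 :=
  Finset.analyticAt_fun_sum _ fun f hf => analyticAt_const.mul (hG.analyticAt f hf)

theorem linearizer_zero (hG : IsGermGroup G) : linearizer G 0 = 0 :=
  Finset.sum_eq_zero fun f hf => by rw [hG.map_zero f hf, mul_zero]

theorem deriv_linearizer (hG : IsGermGroup G) : deriv (linearizer G) 0 = G.card := by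
  have hdiff : ∀ f ∈ G, DifferentiableAt 𝕜 (fun z => (deriv f 0)⁻¹ * f z) 0 :=
    fun f hf => (hG.analyticAt f hf).differentiableAt.const_mul _
  unfold linearizer
  rw [deriv_fun_sum hdiff, Finset.card_eq_sum_ones, Nat.cast_sum]
  refine Finset.sum_congr rfl fun f hf => ?_
  rw [deriv_const_mul _ (hG.analyticAt f hf).differentiableAt,
    inv_mul_cancel₀ (hG.deriv_ne_zero f hf), Nat.cast_one]

theorem deriv_linearizer_ne_zero [CharZero 𝕜] (hG : IsGermGroup G) (hne : G.Nonempty) :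
    deriv (linearizer G) 0 ≠ 0 := by
  rw [hG.deriv_linearizer]
  exact Nat.cast_ne_zero.2 hne.card_pos.ne'

variable [CompleteSpace 𝕜]

/-- Right composition with `f ∈ G` permutes `G`, so the average defining `linearizer G` is
only rescaled by `f'(0)`. -/
theorem linearizer_comp (hG : IsGermGroup G) (hf : f ∈ G) :
    linearizer G ∘ f =ᶠ[𝓝 0] fun z => deriv f 0 * linearizer G z := by
  choose! R hRG hR using fun g hg => hG.exists_eventuallyEq_comp g hg f hf
  have hfd := (hG.analyticAt f hf).hasStrictDerivAt
  have hinj : Set.InjOn R G := fun g₁ hg₁ g₂ hg₂ h => by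
    refine hG.eq_of_eventuallyEq g₁ hg₁ g₂ hg₂ ?_
    have := hfd.eventuallyEq_of_comp_right (hG.deriv_ne_zero f hf)
      ((hR g₁ hg₁).symm.trans (h ▸ hR g₂ hg₂))
    rwa [hG.map_zero f hf] at this
  have hperm : ∀ z, ∑ g ∈ G, (deriv (R g) 0)⁻¹ * R g z = linearizer G z := fun z =>
    Finset.sum_nbij R hRG hinj
      ((G.finite_toSet.injOn_iff_bijOn_of_mapsTo hRG).1 hinj).surjOn fun _ _ => rfl
  filter_upwards [(eventually_all_finset G).2 hR] with z hz
  calc linearizer G (f z)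
      = ∑ g ∈ G, deriv f 0 * ((deriv (R g) 0)⁻¹ * R g z) := by
        refine Finset.sum_congr rfl fun g hg => ?_
        rw [hz g hg, hG.deriv_eq_mul hg hf (hR g hg), Function.comp_apply]
        field_simp [hG.deriv_ne_zero f hf, hG.deriv_ne_zero g hg]
    _ = deriv f 0 * linearizer G z := by rw [← Finset.mul_sum, hperm]

variable [CharZero 𝕜]

theorem eventuallyEq_of_deriv_eq (hG : IsGermGroup G) (hne : G.Nonempty) (hf : f ∈ G)
    (hg : g ∈ G) (h : deriv f 0 = deriv g 0) : f =ᶠ[𝓝 0] g := by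
  refine hG.analyticAt_linearizer.hasStrictDerivAt.eventuallyEq_of_comp_left
    (hG.deriv_linearizer_ne_zero hne) (hG.tendsto hf) (hG.tendsto hg) ?_
  filter_upwards [hG.linearizer_comp hf, hG.linearizer_comp hg] with z hfz hgz
  rw [hfz, hgz, h]

theorem exists_forall_eventuallyEq_iterate (hG : IsGermGroup G) (hne : G.Nonempty) :
    ∃ g ∈ G, ∀ f ∈ G, ∃ n : ℕ, f =ᶠ[𝓝 0] g^[n] := by
  obtain ⟨_, ⟨g, hg, rfl⟩, hgen⟩ :=
    (G.finite_toSet.image (deriv · 0)).exists_pow_succ_eq_of_mul_mem (hne.to_set.image _)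
      (fun ⟨f, hf, hf0⟩ => hG.deriv_ne_zero f hf hf0) hG.mul_mem_image_deriv
  refine ⟨g, hg, fun f hf => ?_⟩
  obtain ⟨n, hn⟩ := hgen _ ⟨f, hf, rfl⟩
  obtain ⟨e, he, heg, hde⟩ := hG.exists_eventuallyEq_iterate hg n
  exact ⟨n + 1, (hG.eventuallyEq_of_deriv_eq hne hf he (hn.trans hde.symm)).trans heg⟩

end IsGermGroup

end Germs

/-- Any finite subgroup `G` of the group of germs at `0` of holomorphic
diffeomorphisms of `(ℂ,0)` — modelled as a finite set of analytic germs fixing `0`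
with nonzero derivative, containing pairwise distinct germs and closed under
composition of germs — is conjugate, by a germ `h` of holomorphic diffeomorphism,
to a subgroup of the linear group `{z ↦ az : a ∈ ℂ*}`; moreover `G` is cyclic. -/
theorem stmt3 (G : Finset (ℂ → ℂ)) (hne : G.Nonempty)
    (han : ∀ f ∈ G, AnalyticAt ℂ f 0 ∧ f 0 = 0 ∧ deriv f 0 ≠ 0)
    (hcomp : ∀ f ∈ G, ∀ g ∈ G, ∃ h ∈ G, ∀ᶠ z in nhds (0 : ℂ), h z = f (g z))
    (hsep : ∀ f ∈ G, ∀ g ∈ G, (∀ᶠ z in nhds (0 : ℂ), f z = g z) → f = g) :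
    (∃ h : ℂ → ℂ, AnalyticAt ℂ h 0 ∧ h 0 = 0 ∧ deriv h 0 ≠ 0 ∧
      ∀ f ∈ G, ∃ a : ℂ, a ≠ 0 ∧ ∀ᶠ z in nhds (0 : ℂ), h (f z) = a * h z) ∧
    (∃ g ∈ G, ∀ f ∈ G, ∃ n : ℕ, ∀ᶠ z in nhds (0 : ℂ), f z = g^[n] z) := by
  have hG : IsGermGroup G := ⟨fun f hf => (han f hf).1, fun f hf => (han f hf).2.1,
    fun f hf => (han f hf).2.2, hcomp, hsep⟩
  exact ⟨⟨linearizer G, hG.analyticAt_linearizer, hG.linearizer_zero,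
    hG.deriv_linearizer_ne_zero hne,
    fun f hf => ⟨deriv f 0, hG.deriv_ne_zero f hf, hG.linearizer_comp hf⟩⟩,
    hG.exists_forall_eventuallyEq_iterate hne⟩
end

section
/- (Koenigs) If f ∈ Diff(ℂ,0) has linear part f'(0) = a with |a| ≠ 1 and |a| ≠ 0, then f is analytically linearizable: there exists h ∈ Diff(ℂ,0) with h∘f∘h^{-1}(z) = az. -/
open Filter Metric Set Topology

/-!
If `0 < |a| < 1`, take `h = lim f^[n] / a ^ n`. On a small disc of radius `r`,
`|f z - a z| ≤ C |z| ^ 2`, hence `|f z| ≤ c |z|` with `c = |a| + C r`, so consecutive terms differ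
by at most `C |f^[n] z| ^ 2 / |a| ^ (n + 1) ≤ C r ^ 2 (c ^ 2 / |a|) ^ n / |a|`. Shrinking the disc
until `c ^ 2 < |a|` makes this geometric: the convergence is uniform, so `h` is holomorphic with
`h' 0 = 1`, and `h ∘ f = a h` because `f^[n] (f z) / a ^ n = a (f^[n + 1] z / a ^ (n + 1))`.
If `|a| > 1`, the local inverse of `f` has multiplier `a⁻¹`, and a linearization of it also
linearizes `f`.
-/

theorem AnalyticAt.isBigO_sub_sub_smul_deriv {𝕜 E : Type*} [NontriviallyNormedField 𝕜]
    [NormedAddCommGroup E] [NormedSpace 𝕜 E] {f : 𝕜 → E} {x : 𝕜} (hf : AnalyticAt 𝕜 f x) :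
    (fun y => f (x + y) - f x - y • deriv f x) =O[𝓝 0] fun y => ‖y‖ ^ 2 := by
  obtain ⟨p, hp⟩ := hf
  convert hp.isBigO_sub_partialSum_pow 2 using 2 with y
  simp only [FormalMultilinearSeries.partialSum, Finset.sum_range_succ, Finset.sum_range_zero,
    zero_add, hp.coeff_zero, p.apply_eq_pow_smul_coeff (n := 1), hp.deriv, pow_one, one_smul,
    sub_sub]

theorem tendstoUniformlyOn_limUnder_of_dist_le_geometric {α β : Type*} [PseudoMetricSpace β]
    [CompleteSpace β] [Nonempty β] {F : ℕ → α → β} {s : Set α} {B q : ℝ}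
    (hq0 : 0 ≤ q) (hq1 : q < 1) (hF : ∀ x ∈ s, ∀ n, dist (F n x) (F (n + 1) x) ≤ B * q ^ n) :
    TendstoUniformlyOn F (fun x => limUnder atTop (F · x)) atTop s := by
  have hbound : Tendsto (fun n => B * q ^ n / (1 - q)) atTop (𝓝 0) := by
    simpa using ((tendsto_pow_atTop_nhds_zero_of_lt_one hq0 hq1).const_mul B).div_const (1 - q)
  refine Metric.tendstoUniformlyOn_iff.2 fun ε hε => ?_
  filter_upwards [hbound.eventually (gt_mem_nhds hε)] with n hn x hx
  have hlim := (cauchySeq_of_le_geometric q B hq1 (hF x hx)).tendsto_limUnder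
  rw [dist_comm]
  exact (dist_le_of_le_geometric_of_tendsto q B hq1 (hF x hx) hlim n).trans_lt hn

theorem norm_iterate_le_pow_mul {E : Type*} [SeminormedAddCommGroup E] {f : E → E} {c r : ℝ}
    (hc0 : 0 ≤ c) (hc1 : c ≤ 1) (hf : ∀ z, ‖z‖ ≤ r → ‖f z‖ ≤ c * ‖z‖) (n : ℕ) {z : E}
    (hz : ‖z‖ ≤ r) : ‖f^[n] z‖ ≤ c ^ n * ‖z‖ := by
  induction n with
  | zero => simp
  | succ n ih =>
    have hr : ‖f^[n] z‖ ≤ r :=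
      ih.trans ((mul_le_of_le_one_left (norm_nonneg z) (pow_le_one₀ hc0 hc1)).trans hz)
    rw [Function.iterate_succ_apply', pow_succ', mul_assoc]
    exact (hf _ hr).trans (mul_le_mul_of_nonneg_left ih hc0)

theorem HasDerivAt.iterate_div_pow {𝕜 : Type*} [NontriviallyNormedField 𝕜] {f : 𝕜 → 𝕜}
    {a x : 𝕜} (hf : HasDerivAt f a x) (hx : f x = x) (ha : a ≠ 0) (n : ℕ) :
    HasDerivAt (fun z => f^[n] z / a ^ n) 1 x := by
  simpa [ha] using (HasDerivAt.iterate x hf hx n).div_const (a ^ n)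

section Koenigs

variable {𝕜 : Type*} [NormedField 𝕜] {f : 𝕜 → 𝕜} {a : 𝕜} {C r : ℝ}

def koenigsApprox (f : 𝕜 → 𝕜) (a : 𝕜) (n : ℕ) (z : 𝕜) : 𝕜 :=
  f^[n] z / a ^ n

noncomputable def koenigsFunction (f : 𝕜 → 𝕜) (a : 𝕜) (z : 𝕜) : 𝕜 :=
  limUnder atTop fun n => koenigsApprox f a n z

theorem koenigsApprox_map (ha : a ≠ 0) (n : ℕ) (z : 𝕜) :
    koenigsApprox f a n (f z) = a * koenigsApprox f a (n + 1) z := by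
  simp only [koenigsApprox, ← Function.iterate_succ_apply, pow_succ']
  field_simp

theorem koenigsFunction_map (ha : a ≠ 0) {z : 𝕜}
    (hz : ∃ l, Tendsto (koenigsApprox f a · z) atTop (𝓝 l)) :
    koenigsFunction f a (f z) = a * koenigsFunction f a z := by
  obtain ⟨l, hl⟩ := hz
  have hshift : Tendsto (koenigsApprox f a · (f z)) atTop (𝓝 (a * l)) := by
    simpa only [Function.comp_def, koenigsApprox_map ha] using
      (hl.comp (tendsto_add_atTop_nat 1)).const_mul a
  rw [koenigsFunction, koenigsFunction, hshift.limUnder_eq, hl.limUnder_eq]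

theorem koenigsFunction_zero (h0 : f 0 = 0) : koenigsFunction f a 0 = 0 := by
  simp only [koenigsFunction, koenigsApprox, Function.iterate_fixed h0, zero_div]
  exact tendsto_const_nhds.limUnder_eq

theorem norm_le_of_norm_sub_mul_le (hC : 0 ≤ C)
    (hquad : ∀ z, ‖z‖ ≤ r → ‖f z - a * z‖ ≤ C * ‖z‖ ^ 2) {z : 𝕜} (hz : ‖z‖ ≤ r) :
    ‖f z‖ ≤ (‖a‖ + C * r) * ‖z‖ :=
  calc ‖f z‖ ≤ ‖a * z‖ + ‖f z - a * z‖ := norm_le_insert' _ _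
    _ ≤ ‖a‖ * ‖z‖ + C * (r * ‖z‖) := by
      rw [norm_mul]
      gcongr
      exact (hquad z hz).trans (by rw [sq]; gcongr)
    _ = (‖a‖ + C * r) * ‖z‖ := by ring

theorem norm_koenigsApprox_sub_succ_le (ha : a ≠ 0) (hC : 0 ≤ C)
    (hquad : ∀ z, ‖z‖ ≤ r → ‖f z - a * z‖ ≤ C * ‖z‖ ^ 2) (hc : ‖a‖ + C * r ≤ 1) (n : ℕ)
    {z : 𝕜} (hz : ‖z‖ ≤ r) :
    ‖koenigsApprox f a n z - koenigsApprox f a (n + 1) z‖ ≤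
      C * r ^ 2 / ‖a‖ * ((‖a‖ + C * r) ^ 2 / ‖a‖) ^ n := by
  set c := ‖a‖ + C * r
  have hr : 0 ≤ r := (norm_nonneg z).trans hz
  have hc0 : 0 ≤ c := by positivity
  have hw : ‖f^[n] z‖ ≤ c ^ n * r :=
    (norm_iterate_le_pow_mul hc0 hc (fun _ => norm_le_of_norm_sub_mul_le hC hquad) n hz).trans
      (by gcongr)
  have hwr : ‖f^[n] z‖ ≤ r := hw.trans (mul_le_of_le_one_left hr (pow_le_one₀ hc0 hc))
  have hsub : koenigsApprox f a n z - koenigsApprox f a (n + 1) z =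
      (a * f^[n] z - f (f^[n] z)) / a ^ (n + 1) := by
    simp only [koenigsApprox, Function.iterate_succ_apply', pow_succ]
    field_simp
  have ha' : ‖a‖ ≠ 0 := norm_ne_zero_iff.2 ha
  clear_value c
  rw [hsub, norm_div, norm_sub_rev, norm_pow, div_le_iff₀ (by positivity)]
  calc ‖f (f^[n] z) - a * f^[n] z‖ ≤ C * ‖f^[n] z‖ ^ 2 := hquad _ hwr
    _ ≤ C * (c ^ n * r) ^ 2 := by gcongr
    _ = C * r ^ 2 / ‖a‖ * (c ^ 2 / ‖a‖) ^ n * ‖a‖ ^ (n + 1) := by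
      rw [div_pow, pow_succ]
      field_simp
      ring

theorem tendstoUniformlyOn_koenigsApprox [CompleteSpace 𝕜] (ha : a ≠ 0) (hC : 0 ≤ C)
    (hquad : ∀ z, ‖z‖ ≤ r → ‖f z - a * z‖ ≤ C * ‖z‖ ^ 2) (hc : ‖a‖ + C * r ≤ 1)
    (hq : (‖a‖ + C * r) ^ 2 < ‖a‖) :
    TendstoUniformlyOn (koenigsApprox f a) (koenigsFunction f a) atTop (closedBall 0 r) :=
  tendstoUniformlyOn_limUnder_of_dist_le_geometric (by positivity)
    ((div_lt_one (norm_pos_iff.2 ha)).2 hq) fun z hz n => by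
      rw [dist_eq_norm]
      exact norm_koenigsApprox_sub_succ_le ha hC hquad hc n (mem_closedBall_zero_iff.1 hz)

end Koenigs

section Complex

variable {f : ℂ → ℂ} {a : ℂ} {r : ℝ}

theorem analyticAt_koenigsFunction (hr : 0 < r)
    (hloc : TendstoLocallyUniformlyOn (koenigsApprox f a) (koenigsFunction f a) atTop (ball 0 r))
    (hdiff : ∀ n, DifferentiableOn ℂ (koenigsApprox f a n) (ball 0 r)) :
    AnalyticAt ℂ (koenigsFunction f a) 0 :=
  (hloc.differentiableOn (.of_forall hdiff) isOpen_ball).analyticAt (ball_mem_nhds 0 hr)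

theorem deriv_koenigsFunction_zero (hr : 0 < r)
    (hloc : TendstoLocallyUniformlyOn (koenigsApprox f a) (koenigsFunction f a) atTop (ball 0 r))
    (hdiff : ∀ n, DifferentiableOn ℂ (koenigsApprox f a n) (ball 0 r)) (hf : HasDerivAt f a 0)
    (h0 : f 0 = 0) (ha : a ≠ 0) : deriv (koenigsFunction f a) 0 = 1 := by
  have hderiv : ∀ n, deriv (koenigsApprox f a n) 0 = 1 := fun n =>
    (hf.iterate_div_pow h0 ha n).deriv
  have hlim := (hloc.deriv (.of_forall hdiff) isOpen_ball).tendsto_at (mem_ball_self hr)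
  simp only [Function.comp_def, hderiv] at hlim
  exact tendsto_nhds_unique hlim tendsto_const_nhds

theorem eventually_koenigsFunction_map (hr : 0 < r) (ha : a ≠ 0)
    (hloc : TendstoLocallyUniformlyOn (koenigsApprox f a) (koenigsFunction f a) atTop
      (ball 0 r)) :
    ∀ᶠ z in 𝓝 0, koenigsFunction f a (f z) = a * koenigsFunction f a z := by
  filter_upwards [ball_mem_nhds 0 hr] with z hz
  exact koenigsFunction_map ha ⟨_, hloc.tendsto_at hz⟩

end Complex

theorem eventually_add_mul_lt_one_and_sq_lt {A : ℝ} (C : ℝ) (hA0 : 0 < A) (hA1 : A < 1) :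
    ∀ᶠ r in 𝓝 0, A + C * r < 1 ∧ (A + C * r) ^ 2 < A := by
  have hc : Tendsto (fun r : ℝ => A + C * r) (𝓝 0) (𝓝 A) := by
    simpa using tendsto_const_nhds.add (tendsto_const_nhds.mul (tendsto_id (x := 𝓝 (0 : ℝ))))
  exact (hc.eventually (eventually_lt_nhds hA1)).and
    ((hc.pow 2).eventually (eventually_lt_nhds (by nlinarith)))

theorem exists_linearization_of_norm_lt_one {f : ℂ → ℂ} {a : ℂ} (hf : AnalyticAt ℂ f 0)
    (h0 : f 0 = 0) (ha : deriv f 0 = a) (ha1 : ‖a‖ < 1) (ha0 : a ≠ 0) :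
    ∃ h : ℂ → ℂ, AnalyticAt ℂ h 0 ∧ h 0 = 0 ∧ deriv h 0 = 1 ∧
      ∀ᶠ z in 𝓝 0, h (f z) = a * h z := by
  obtain ⟨C, hC, hCf⟩ := hf.isBigO_sub_sub_smul_deriv.exists_pos
  obtain ⟨ε, hε, hCε⟩ := Metric.eventually_nhds_iff.1 hCf.bound
  obtain ⟨ρ, hρ, hfρ⟩ := hf.exists_ball_analyticOnNhd
  obtain ⟨r, ⟨hrε, hrρ, hc1, hq⟩, hr⟩ := (eventually_nhdsWithin_of_eventually_nhds
    ((eventually_lt_nhds hε).and <| (eventually_lt_nhds hρ).and <|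
      eventually_add_mul_lt_one_and_sq_lt C (norm_pos_iff.2 ha0) ha1)).and
    (self_mem_nhdsWithin (s := Ioi 0)) |>.exists
  have hquad : ∀ z : ℂ, ‖z‖ ≤ r → ‖f z - a * z‖ ≤ C * ‖z‖ ^ 2 := fun z hz => by
    simpa [h0, ha, mul_comm] using hCε (y := z) (by simpa using hz.trans_lt hrε)
  have hmaps : MapsTo f (ball 0 r) (ball 0 r) := fun z hz => by
    rw [mem_ball_zero_iff] at hz ⊢
    exact (norm_le_of_norm_sub_mul_le hC.le hquad hz.le).trans_lt
      ((mul_le_of_le_one_left (norm_nonneg z) hc1.le).trans_lt hz)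
  have hdiff : ∀ n, DifferentiableOn ℂ (koenigsApprox f a n) (ball 0 r) := fun n =>
    ((hfρ.mono (ball_subset_ball hrρ.le)).differentiableOn.iterate hmaps n).div_const _
  have hloc := (tendstoUniformlyOn_koenigsApprox ha0 hC.le hquad hc1.le hq
    ).tendstoLocallyUniformlyOn.mono ball_subset_closedBall
  exact ⟨koenigsFunction f a, analyticAt_koenigsFunction hr hloc hdiff, koenigsFunction_zero h0,
    deriv_koenigsFunction_zero hr hloc hdiff (ha ▸ hf.differentiableAt.hasDerivAt) h0 ha0,
    eventually_koenigsFunction_map hr ha0 hloc⟩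

theorem AnalyticAt.exists_analyticAt_leftInverse {𝕜 : Type*} [NontriviallyNormedField 𝕜]
    [CompleteSpace 𝕜] [CharZero 𝕜] {f : 𝕜 → 𝕜} {x : 𝕜} (hf : AnalyticAt 𝕜 f x)
    (hf' : deriv f x ≠ 0) :
    ∃ g : 𝕜 → 𝕜, AnalyticAt 𝕜 g (f x) ∧ g (f x) = x ∧ deriv g (f x) = (deriv f x)⁻¹ ∧
      ∀ᶠ z in 𝓝 x, g (f z) = z :=
  ⟨_, hf.analyticAt_localInverse hf', HasStrictFDerivAt.localInverse_apply_image _,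
    (hf.hasStrictDerivAt.to_localInverse hf').hasDerivAt.deriv,
    hf.hasStrictDerivAt.eventually_left_inverse hf'⟩

theorem Filter.Eventually.map_eq_inv_mul_of_leftInverse {α K : Type*} [GroupWithZero K]
    {l l' : Filter α} {f g : α → α} {h : α → K} {b : K} (hgf : ∀ᶠ z in l, g (f z) = z)
    (hf : Tendsto f l l') (hg : ∀ᶠ w in l', h (g w) = b * h w) (hb : b ≠ 0) :
    ∀ᶠ z in l, h (f z) = b⁻¹ * h z := by
  filter_upwards [hgf, hf.eventually hg] with z hz hzg
  rw [hz] at hzg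
  rw [hzg, inv_mul_cancel_left₀ hb]

/-- **Koenigs' linearization theorem.** If `f` is a germ at `0` of a holomorphic
diffeomorphism fixing `0` with multiplier `a = f'(0)`, `|a| ≠ 1` and `a ≠ 0`, then `f`
is analytically linearizable: there is a germ `h` of holomorphic diffeomorphism fixing `0`
with `h ∘ f ∘ h⁻¹ (z) = a z`, i.e. `h(f(z)) = a · h(z)` near `0`. -/
theorem stmt4 (f : ℂ → ℂ) (hf : AnalyticAt ℂ f 0) (h0 : f 0 = 0)
    (a : ℂ) (ha : deriv f 0 = a) (haval : ‖a‖ ≠ 1) (ha0 : a ≠ 0) :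
    ∃ h : ℂ → ℂ, AnalyticAt ℂ h 0 ∧ h 0 = 0 ∧ deriv h 0 ≠ 0 ∧
      ∀ᶠ z in nhds (0 : ℂ), h (f z) = a * h z := by
  rcases haval.lt_or_gt with ha1 | ha1
  · obtain ⟨h, hh, hh0, hh', hfh⟩ := exists_linearization_of_norm_lt_one hf h0 ha ha1 ha0
    exact ⟨h, hh, hh0, hh' ▸ one_ne_zero, hfh⟩
  · obtain ⟨g, hg, hg0, hg', hgf⟩ := hf.exists_analyticAt_leftInverse (ha ▸ ha0)
    rw [h0] at hg hg0 hg'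
    rw [ha] at hg'
    obtain ⟨h, hh, hh0, hh', hgh⟩ := exists_linearization_of_norm_lt_one hg hg0 hg'
      (by rwa [norm_inv, inv_lt_one₀ (norm_pos_iff.2 ha0)]) (inv_ne_zero ha0)
    refine ⟨h, hh, hh0, hh' ▸ one_ne_zero, ?_⟩
    have hf0 : Tendsto f (𝓝 0) (𝓝 0) := by simpa only [h0] using hf.continuousAt.tendsto
    simpa using hgf.map_eq_inv_mul_of_leftInverse hf0 hgh (inv_ne_zero ha0)
end

section
/- If f and g are germs at 0 ∈ ℂ² of holomorphic functions that are both reduced equations of {y=0} (i.e., f = y·u, g = y·v with u, v units), and the 2-form df∧dg has zero divisor exactly {y=0} with multiplicity one, then there exist unique local coordinates (x̃, ỹ) with (x̃,ỹ)|_{y=0} = (x,0) such that f = ỹ and g = e^{u(x̃)} ỹ for a function u with u'(0) ≠ 0, u being unique modulo 2πi. -/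
open Filter Topology Complex

/-!
Write `g = h f` with `h = v / u` a unit and take a holomorphic logarithm `L` of `h`. Since
`df ∧ dg = f · df ∧ dh` and `df = u dy` along `C`, the divisor condition forces `∂ₓh(0) ≠ 0`,
so `U := L|_C` is a local biholomorphism of `C` and `x̃ := U⁻¹ ∘ L` gives `g = e^{U(x̃)} f`.
Conversely, two such normal forms have `e^{U'(x̃')} = e^{U(x̃)}` off `C`, hence everywhere, so
`U' ∘ x̃' - U ∘ x̃` is a constant in `2πiℤ`; restricting to `C` gives `U' = U + 2πin`, and
local injectivity of `U` then gives `x̃' = x̃`.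
-/

theorem ContinuousAt.exists_int_eventually_eq_add_of_exp_eq {X : Type*} [TopologicalSpace X]
    {φ ψ : X → ℂ} {p : X} (hφ : ContinuousAt φ p) (hψ : ContinuousAt ψ p)
    (h : ∀ᶠ q in 𝓝 p, exp (φ q) = exp (ψ q)) :
    ∃ n : ℤ, ∀ᶠ q in 𝓝 p, φ q = ψ q + 2 * Real.pi * I * n := by
  obtain ⟨n, hn⟩ := exp_eq_exp_iff_exists_int.mp h.self_of_nhds
  refine ⟨n, ?_⟩
  set χ : X → ℂ := fun q => φ q - ψ q - n * (2 * Real.pi * I)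
  have hχp : χ p = 0 := by simp only [χ, hn]; ring
  -- `χ` stays in the strip `|Im| < π` on which `log` inverts `exp`.
  have hstrip : ∀ᶠ q in 𝓝 p, (χ q).im ∈ Set.Ioo (-Real.pi) Real.pi := by
    have hcont : ContinuousAt (fun q => (χ q).im) p :=
      continuous_im.continuousAt.comp ((hφ.sub hψ).sub continuousAt_const)
    refine hcont.preimage_mem_nhds (Ioo_mem_nhds ?_ ?_) <;> simp [hχp, Real.pi_pos]
  filter_upwards [h, hstrip] with q hq hqs
  have hexp : exp (χ q) = 1 := by
    simp only [χ, exp_sub, hq, div_self (exp_ne_zero _), exp_int_mul_two_pi_mul_I, div_one]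
  have : χ q = 0 := by rw [← log_exp hqs.1 hqs.2.le, hexp, log_one]
  simp only [χ] at this
  linear_combination this

theorem eq_of_continuousAt_of_eventually_snd_ne {X Y E : Type*} [TopologicalSpace X]
    [TopologicalSpace Y] [T1Space Y] [∀ y : Y, (𝓝[≠] y).NeBot]
    [TopologicalSpace E] [T2Space E]
    {F G : X × Y → E} {p : X × Y} {y₀ : Y} (hF : ContinuousAt F p) (hG : ContinuousAt G p)
    (h : ∀ᶠ q in 𝓝 p, q.2 ≠ y₀ → F q = G q) : F p = G p := by
  set S : Set (X × Y) := {q | q.2 ≠ y₀}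
  have : (𝓝[S] p).NeBot := mem_closure_iff_nhdsWithin_neBot.mp
    (((dense_compl_singleton y₀).preimage (isOpenMap_snd (X := X))).closure_eq ▸
      Set.mem_univ p)
  refine tendsto_nhds_unique (l := 𝓝[S] p) (hF.tendsto.mono_left nhdsWithin_le_nhds)
    ((hG.tendsto.mono_left nhdsWithin_le_nhds).congr' ?_)
  filter_upwards [nhdsWithin_le_nhds h, self_mem_nhdsWithin] with q hq hqS
  exact (hq hqS).symm

theorem eventuallyEq_of_eventually_snd_ne {X Y E : Type*} [TopologicalSpace X]
    [TopologicalSpace Y] [T1Space Y] [∀ y : Y, (𝓝[≠] y).NeBot]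
    [TopologicalSpace E] [T2Space E]
    {F G : X × Y → E} {p : X × Y} {y₀ : Y} (hF : ∀ᶠ q in 𝓝 p, ContinuousAt F q)
    (hG : ∀ᶠ q in 𝓝 p, ContinuousAt G q) (h : ∀ᶠ q in 𝓝 p, q.2 ≠ y₀ → F q = G q) :
    F =ᶠ[𝓝 p] G := by
  filter_upwards [hF, hG, h.eventually_nhds] with q hFq hGq hq
  exact eq_of_continuousAt_of_eventually_snd_ne hFq hGq hq

theorem AnalyticAt.exists_analyticAt_exp_eq {E : Type*} [NormedAddCommGroup E]
    [NormedSpace ℂ E] {h : E → ℂ} {p : E} (hh : AnalyticAt ℂ h p) (hp : h p ≠ 0) :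
    ∃ L : E → ℂ, AnalyticAt ℂ L p ∧ ∀ᶠ q in 𝓝 p, Complex.exp (L q) = h q := by
  refine ⟨fun q => Complex.log (h q / h p) + Complex.log (h p), ?_, ?_⟩
  · refine ((hh.div analyticAt_const hp).clog ?_).add analyticAt_const
    simp [div_self hp, one_mem_slitPlane]
  · filter_upwards [hh.continuousAt.eventually_ne hp] with q hq
    rw [exp_add, exp_log (div_ne_zero hq hp), exp_log hp, div_mul_cancel₀ _ hp]

section TwoVariables

variable {𝕜 : Type*} [NontriviallyNormedField 𝕜]

/-- The coefficient of `df ∧ dg` with respect to `dx ∧ dy`. -/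
noncomputable def jacobianDet (f g : 𝕜 × 𝕜 → 𝕜) (p : 𝕜 × 𝕜) : 𝕜 :=
  fderiv 𝕜 f p (1, 0) * fderiv 𝕜 g p (0, 1) - fderiv 𝕜 f p (0, 1) * fderiv 𝕜 g p (1, 0)

theorem Filter.EventuallyEq.jacobianDet_eq {f g g' : 𝕜 × 𝕜 → 𝕜} {p : 𝕜 × 𝕜}
    (hg : g =ᶠ[𝓝 p] g') : jacobianDet f g p = jacobianDet f g' p := by
  simp only [jacobianDet, hg.fderiv_eq]

theorem jacobianDet_mul_left {f h : 𝕜 × 𝕜 → 𝕜} {p : 𝕜 × 𝕜} (hf : DifferentiableAt 𝕜 f p)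
    (hh : DifferentiableAt 𝕜 h p) :
    jacobianDet f (fun q => h q * f q) p = f p * jacobianDet f h p := by
  simp only [jacobianDet, fderiv_fun_mul hh hf, add_apply, smul_apply, smul_eq_mul]
  ring

theorem jacobianDet_of_eventuallyEq_snd_mul {f h u : 𝕜 × 𝕜 → 𝕜} {p : 𝕜 × 𝕜} (hp : p.2 = 0)
    (hu : DifferentiableAt 𝕜 u p) (hfu : f =ᶠ[𝓝 p] fun q => q.2 * u q) :
    jacobianDet f h p = -(u p * fderiv 𝕜 h p (1, 0)) := by
  have hdf : fderiv 𝕜 f p = p.2 • fderiv 𝕜 u p + u p • ContinuousLinearMap.snd 𝕜 𝕜 𝕜 := by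
    rw [hfu.fderiv_eq]
    exact (hasFDerivAt_snd.mul hu.hasFDerivAt).fderiv
  simp [jacobianDet, hdf, hp]

theorem AnalyticAt.continuousAt_jacobianDet [CompleteSpace 𝕜] {f g : 𝕜 × 𝕜 → 𝕜} {p : 𝕜 × 𝕜}
    (hf : AnalyticAt 𝕜 f p) (hg : AnalyticAt 𝕜 g p) : ContinuousAt (jacobianDet f g) p := by
  have hd : ∀ {F : 𝕜 × 𝕜 → 𝕜} (v : 𝕜 × 𝕜), AnalyticAt 𝕜 F p →
      ContinuousAt (fun q => fderiv 𝕜 F q v) p :=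
    fun v hF => hF.fderiv.continuousAt.clm_apply continuousAt_const
  exact ((hd _ hf).mul (hd _ hg)).sub ((hd _ hf).mul (hd _ hg))

theorem fderiv_apply_one_zero_ne_zero_of_jacobianDet_eq [CompleteSpace 𝕜]
    {f g h u w : 𝕜 × 𝕜 → 𝕜} (hf : AnalyticAt 𝕜 f 0) (hh : AnalyticAt 𝕜 h 0)
    (hu : AnalyticAt 𝕜 u 0) (hw : ContinuousAt w 0) (hw0 : w 0 ≠ 0)
    (hfu : ∀ᶠ p in 𝓝 0, f p = p.2 * u p) (hgh : ∀ᶠ p in 𝓝 0, g p = h p * f p)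
    (hJ : ∀ᶠ p in 𝓝 0, jacobianDet f g p = p.2 * w p) :
    fderiv 𝕜 h 0 (1, 0) ≠ 0 := by
  have hJfh : ∀ᶠ p in 𝓝 0, jacobianDet f g p = f p * jacobianDet f h p := by
    filter_upwards [hgh.eventually_nhds, hf.eventually_analyticAt, hh.eventually_analyticAt]
      with p hgp hfp hhp
    rw [Filter.EventuallyEq.jacobianDet_eq hgp,
      jacobianDet_mul_left hfp.differentiableAt hhp.differentiableAt]
  -- Off `C` both `y * w` and `f * J(f, h) = y * u * J(f, h)` compute `J(f, g)`.
  have hw_eq : w 0 = u 0 * jacobianDet f h 0 := by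
    refine eq_of_continuousAt_of_eventually_snd_ne (y₀ := 0) hw
      (hu.continuousAt.mul (hf.continuousAt_jacobianDet hh)) ?_
    filter_upwards [hJ, hJfh, hfu] with p hJp hJfhp hfp hp
    rw [hJfhp, hfp, mul_assoc] at hJp
    exact (mul_left_cancel₀ hp hJp).symm
  rw [jacobianDet_of_eventuallyEq_snd_mul rfl hu.differentiableAt hfu] at hw_eq
  intro hx
  exact hw0 (by rw [hw_eq, hx]; ring)

theorem DifferentiableAt.deriv_comp_prodMk_const {h : 𝕜 × 𝕜 → 𝕜} {x y : 𝕜}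
    (hh : DifferentiableAt 𝕜 h (x, y)) :
    deriv (fun t => h (t, y)) x = fderiv 𝕜 h (x, y) (1, 0) :=
  (hh.hasFDerivAt.comp_hasDerivAt x ((hasDerivAt_id x).prodMk (hasDerivAt_const x y))).deriv

theorem AnalyticAt.comp_mk_zero {E : Type*} [NormedAddCommGroup E] [NormedSpace 𝕜 E]
    {L : 𝕜 × 𝕜 → E} (hL : AnalyticAt 𝕜 L 0) :
    AnalyticAt 𝕜 (fun x => L (x, 0)) 0 :=
  hL.comp_of_eq (analyticAt_id.prod analyticAt_const) rfl

theorem tendsto_prodMk_zero_nhds_zero : Tendsto (fun x : 𝕜 => (x, (0 : 𝕜))) (𝓝 0) (𝓝 0) :=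
  (continuous_id.prodMk continuous_const).tendsto' 0 0 rfl

end TwoVariables

theorem deriv_ne_zero_of_exp_eq {U H : ℂ → ℂ} {a : ℂ} (hU : DifferentiableAt ℂ U a)
    (hexp : (fun x => exp (U x)) =ᶠ[𝓝 a] H) (hH : deriv H a ≠ 0) : deriv U a ≠ 0 := by
  have hderiv : deriv H a = exp (U a) * deriv U a := by
    rw [← hexp.deriv_eq]
    exact hU.hasDerivAt.cexp.deriv
  intro hz
  exact hH (by rw [hderiv, hz, mul_zero])

/-- The normal form `g = e^{U(x̃)} ỹ` in the coordinates `(x̃, ỹ) = (xt, f)`. -/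
structure IsNormalForm (f g xt : ℂ × ℂ → ℂ) (U : ℂ → ℂ) : Prop where
  analyticAt_xt : AnalyticAt ℂ xt 0
  analyticAt_U : AnalyticAt ℂ U 0
  deriv_U_ne_zero : deriv U 0 ≠ 0
  xt_mk_zero : ∀ᶠ x in 𝓝 (0 : ℂ), xt (x, 0) = x
  eq_exp_mul : ∀ᶠ p in 𝓝 (0 : ℂ × ℂ), g p = exp (U (xt p)) * f p

namespace IsNormalForm

variable {f g xt : ℂ × ℂ → ℂ} {U : ℂ → ℂ}

theorem xt_zero (hN : IsNormalForm f g xt U) : xt 0 = 0 :=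
  hN.xt_mk_zero.self_of_nhds

theorem tendsto_xt (hN : IsNormalForm f g xt U) : Tendsto xt (𝓝 0) (𝓝 0) :=
  hN.xt_zero ▸ hN.analyticAt_xt.continuousAt.tendsto

theorem eventually_analyticAt_comp (hN : IsNormalForm f g xt U) :
    ∀ᶠ p in 𝓝 0, AnalyticAt ℂ (fun q => U (xt q)) p :=
  (hN.analyticAt_U.comp_of_eq hN.analyticAt_xt hN.xt_zero).eventually_analyticAt

end IsNormalForm

theorem exists_isNormalForm {f g L : ℂ × ℂ → ℂ} (hL : AnalyticAt ℂ L 0)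
    (hLx : deriv (fun x => L (x, 0)) 0 ≠ 0) (hgL : ∀ᶠ p in 𝓝 0, g p = exp (L p) * f p) :
    ∃ xt U, IsNormalForm f g xt U := by
  set U : ℂ → ℂ := fun x => L (x, 0)
  have hU : AnalyticAt ℂ U 0 := hL.comp_mk_zero
  set G := hU.hasStrictDerivAt.localInverse U (deriv U 0) 0 hLx
  have hG : AnalyticAt ℂ G (L 0) := hU.analyticAt_localInverse hLx
  have hUG : ∀ᶠ p in 𝓝 0, U (G (L p)) = L p :=
    hL.continuousAt.eventually (hU.hasStrictDerivAt.eventually_right_inverse hLx)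
  refine ⟨G ∘ L, U,
    ⟨hG.comp hL, hU, hLx, hU.hasStrictDerivAt.eventually_left_inverse hLx, ?_⟩⟩
  filter_upwards [hgL, hUG] with p hgp hUGp
  rw [Function.comp_apply, hUGp, hgp]

theorem IsNormalForm.unique {f g xt xt' : ℂ × ℂ → ℂ} {U U' : ℂ → ℂ}
    (hN : IsNormalForm f g xt U) (hN' : IsNormalForm f g xt' U')
    (hf : ∀ᶠ p in 𝓝 0, p.2 ≠ 0 → f p ≠ 0) :
    xt' =ᶠ[𝓝 0] xt ∧ ∃ n : ℤ, ∀ᶠ x in 𝓝 0, U' x = U x + 2 * Real.pi * I * n := by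
  have hexp : ∀ᶠ p in 𝓝 0, exp (U' (xt' p)) = exp (U (xt p)) := by
    refine eventuallyEq_of_eventually_snd_ne (y₀ := 0)
      (hN'.eventually_analyticAt_comp.mono fun p hp => hp.continuousAt.cexp)
      (hN.eventually_analyticAt_comp.mono fun p hp => hp.continuousAt.cexp) ?_
    filter_upwards [hN.eq_exp_mul, hN'.eq_exp_mul, hf] with p hgp hgp' hfp hp
    exact mul_right_cancel₀ (hfp hp) (hgp'.symm.trans hgp)
  obtain ⟨n, hn⟩ := ContinuousAt.exists_int_eventually_eq_add_of_exp_eq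
    hN'.eventually_analyticAt_comp.self_of_nhds.continuousAt
    hN.eventually_analyticAt_comp.self_of_nhds.continuousAt hexp
  have hU' : ∀ᶠ x in 𝓝 0, U' x = U x + 2 * Real.pi * I * n := by
    filter_upwards [tendsto_prodMk_zero_nhds_zero.eventually hn, hN.xt_mk_zero,
      hN'.xt_mk_zero] with x hx hxt hxt'
    rwa [hxt, hxt'] at hx
  refine ⟨?_, n, hU'⟩
  have hG := hN.analyticAt_U.hasStrictDerivAt.eventually_left_inverse hN.deriv_U_ne_zero
  filter_upwards [hn, hN'.tendsto_xt.eventually hU', hN'.tendsto_xt.eventually hG,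
    hN.tendsto_xt.eventually hG] with p hp hp' hGp' hGp
  rw [← hGp', ← hGp, ← add_right_cancel_iff.mp (hp'.symm.trans hp)]

theorem stmt8_general (f g u v w : ℂ × ℂ → ℂ)
    (hf : AnalyticAt ℂ f 0)
    (hu : AnalyticAt ℂ u 0) (hv : AnalyticAt ℂ v 0)
    (hu0 : u 0 ≠ 0) (hv0 : v 0 ≠ 0)
    (hfy : ∀ᶠ p in nhds (0 : ℂ × ℂ), f p = p.2 * u p)
    (hgy : ∀ᶠ p in nhds (0 : ℂ × ℂ), g p = p.2 * v p)
    (hw : AnalyticAt ℂ w 0) (hw0 : w 0 ≠ 0)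
    (hJ : ∀ᶠ p in nhds (0 : ℂ × ℂ),
      fderiv ℂ f p (1, 0) * fderiv ℂ g p (0, 1)
        - fderiv ℂ f p (0, 1) * fderiv ℂ g p (1, 0) = p.2 * w p) :
    ∃ xt : ℂ × ℂ → ℂ, ∃ U : ℂ → ℂ,
      AnalyticAt ℂ xt 0 ∧ AnalyticAt ℂ U 0 ∧ deriv U 0 ≠ 0 ∧
      (∀ᶠ x in nhds (0 : ℂ), xt (x, 0) = x) ∧
      (∀ᶠ p in nhds (0 : ℂ × ℂ), g p = Complex.exp (U (xt p)) * f p) ∧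
      (∀ xt' U', AnalyticAt ℂ xt' 0 → AnalyticAt ℂ U' 0 → deriv U' 0 ≠ 0 →
        (∀ᶠ x in nhds (0 : ℂ), xt' (x, 0) = x) →
        (∀ᶠ p in nhds (0 : ℂ × ℂ), g p = Complex.exp (U' (xt' p)) * f p) →
        (∀ᶠ p in nhds (0 : ℂ × ℂ), xt' p = xt p) ∧
        ∃ n : ℤ, ∀ᶠ x in nhds (0 : ℂ), U' x = U x + 2 * Real.pi * Complex.I * n) := by
  set h : ℂ × ℂ → ℂ := fun p => v p / u p
  have hh : AnalyticAt ℂ h 0 := hv.div hu hu0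
  obtain ⟨L, hL, hexpL⟩ := hh.exists_analyticAt_exp_eq (div_ne_zero hv0 hu0)
  have hgh : ∀ᶠ p in 𝓝 0, g p = h p * f p := by
    filter_upwards [hfy, hgy, hu.continuousAt.eventually_ne hu0] with p hfp hgp hup
    simp only [h, hfp, hgp]
    field_simp
  have hhx : fderiv ℂ h 0 (1, 0) ≠ 0 :=
    fderiv_apply_one_zero_ne_zero_of_jacobianDet_eq hf hh hu hw.continuousAt hw0 hfy hgh hJ
  have hLx : deriv (fun x => L (x, 0)) 0 ≠ 0 :=
    deriv_ne_zero_of_exp_eq hL.comp_mk_zero.differentiableAt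
      (tendsto_prodMk_zero_nhds_zero.eventually hexpL)
      (by rwa [hh.differentiableAt.deriv_comp_prodMk_const])
  have hgL : ∀ᶠ p in 𝓝 0, g p = exp (L p) * f p := by
    filter_upwards [hgh, hexpL] with p hgp hLp
    rw [hgp, hLp]
  have hf_ne : ∀ᶠ p in 𝓝 0, p.2 ≠ 0 → f p ≠ 0 := by
    filter_upwards [hfy, hu.continuousAt.eventually_ne hu0] with p hfp hup hp
    rw [hfp]
    exact mul_ne_zero hp hup
  obtain ⟨xt, U, hN⟩ := exists_isNormalForm hL hLx hgL
  exact ⟨xt, U, hN.1, hN.2, hN.3, hN.4, hN.5,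
    fun xt' U' h₁ h₂ h₃ h₄ h₅ => hN.unique ⟨h₁, h₂, h₃, h₄, h₅⟩ hf_ne⟩

/-- Let `f, g` be germs at `0 ∈ ℂ²` of holomorphic functions, both reduced equations
of `C = {y = 0}` (`f = y·u`, `g = y·v` with `u, v` units), such that the divisor of
`df ∧ dg = J·dx∧dy` is exactly `{y=0}` with multiplicity one (`J = y·w`, `w(0) ≠ 0`).
Then there is a unique pair: an analytic coordinate `x̃` restricting to `x` on `C`
(together with `ỹ := f`), and a submersive function `U`, unique modulo `2πi`, such
that `f = ỹ` and `g = e^{U(x̃)}·ỹ` near `0`. -/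
theorem stmt8 (f g u v w : ℂ × ℂ → ℂ)
    (hf : AnalyticAt ℂ f 0) (hg : AnalyticAt ℂ g 0)
    (hu : AnalyticAt ℂ u 0) (hv : AnalyticAt ℂ v 0)
    (hu0 : u 0 ≠ 0) (hv0 : v 0 ≠ 0)
    (hfy : ∀ᶠ p in nhds (0 : ℂ × ℂ), f p = p.2 * u p)
    (hgy : ∀ᶠ p in nhds (0 : ℂ × ℂ), g p = p.2 * v p)
    (hw : AnalyticAt ℂ w 0) (hw0 : w 0 ≠ 0)
    (hJ : ∀ᶠ p in nhds (0 : ℂ × ℂ),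
      fderiv ℂ f p (1, 0) * fderiv ℂ g p (0, 1)
        - fderiv ℂ f p (0, 1) * fderiv ℂ g p (1, 0) = p.2 * w p) :
    ∃ xt : ℂ × ℂ → ℂ, ∃ U : ℂ → ℂ,
      AnalyticAt ℂ xt 0 ∧ AnalyticAt ℂ U 0 ∧ deriv U 0 ≠ 0 ∧
      (∀ᶠ x in nhds (0 : ℂ), xt (x, 0) = x) ∧
      (∀ᶠ p in nhds (0 : ℂ × ℂ), g p = Complex.exp (U (xt p)) * f p) ∧
      (∀ xt' U', AnalyticAt ℂ xt' 0 → AnalyticAt ℂ U' 0 → deriv U' 0 ≠ 0 →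
        (∀ᶠ x in nhds (0 : ℂ), xt' (x, 0) = x) →
        (∀ᶠ p in nhds (0 : ℂ × ℂ), g p = Complex.exp (U' (xt' p)) * f p) →
        (∀ᶠ p in nhds (0 : ℂ × ℂ), xt' p = xt p) ∧
        ∃ n : ℤ, ∀ᶠ x in nhds (0 : ℂ), U' x = U x + 2 * Real.pi * Complex.I * n) :=
  stmt8_general f g u v w hf hu hv hu0 hv0 hfy hgy hw hw0 hJ
end
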